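/- arXiv:1203.3789 — 2 statements merged into one kernel-verified Lean document; each statement's English description precedes it below -/
import Mathlib

section
/- Let $V : (0,\infty) \to (0,\infty)$, and suppose there exist constants $K > 0$, $p, D > 0$ with $a := D/(D+p) < 1$ such that $V(s) \ge K^a s^{pa} V(s/2)^a$ for all $s > 0$, and suppose there exist $C > 0$, $Q \ge 0$ with $V(s/2^i) \ge C^{-1} 2^{-iQ} V(s)$ for all $s > 0$ and $i \in \mathbb{N}$. Then $V(s) \ge K^{D/p} \, 2^{-p D^2/p^2} \, s^D$ for all $s > 0$. -/
open Real Filter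

theorem stmt_9 (V : ℝ → ℝ) (K p D C Q : ℝ)
    (hK : 0 < K) (hp : 0 < p) (hD : 0 < D) (hC : 0 < C) (hQ : 0 ≤ Q)
    (ha : D / (D + p) < 1)
    (hVpos : ∀ s > (0:ℝ), 0 < V s)
    (hiter : ∀ s > (0:ℝ),
      V s ≥ K ^ (D / (D + p)) * s ^ (p * (D / (D + p))) * (V (s / 2)) ^ (D / (D + p)))
    (hdbl : ∀ s > (0:ℝ), ∀ i : ℕ, V (s / 2 ^ i) ≥ C⁻¹ * 2 ^ (-(i : ℝ) * Q) * V s) :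
    ∀ s > (0:ℝ), V s ≥ K ^ (D / p) * 2 ^ (-(p * (D ^ 2 / p ^ 2))) * s ^ D := by
  set a := D / (D + p) with ha_def
  have hDp : 0 < D + p := by linarith
  have ha0 : 0 < a := div_pos hD hDp
  have haD : a * (D + p) = D := by
    rw [ha_def]; field_simp
  set c0 := (D / p) * Real.log K - (D ^ 2 / p) * Real.log 2 with hc0
  have hid1 : (1 - a) * c0 = a * Real.log K - a * D * Real.log 2 := by
    rw [hc0, ha_def]; field_simp; ring
  have hid2 : p * a = D - D * a := by nlinarith [haD]
  set e : ℝ → ℝ := fun s => Real.log (V s) - c0 - D * Real.log s with he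
  -- one step
  have hstep : ∀ s > (0:ℝ), a * e (s / 2) ≤ e s := by
    intro s hs
    have hs2 : 0 < s / 2 := by linarith
    have hV2 := hVpos _ hs2
    have hVs := hVpos s hs
    have h := hiter s hs
    have hlog : a * Real.log K + p * a * Real.log s + a * Real.log (V (s / 2))
        ≤ Real.log (V s) := by
      have h1 : Real.log (K ^ a * s ^ (p * a) * V (s / 2) ^ a) ≤ Real.log (V s) :=
        Real.log_le_log (by positivity) h
      rwa [Real.log_mul (by positivity) (by positivity),
        Real.log_mul (by positivity) (by positivity),
        Real.log_rpow hK, Real.log_rpow hs, Real.log_rpow hV2] at h1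
    have hpa : p * a * Real.log s = (D - D * a) * Real.log s := by rw [hid2]
    have hls : Real.log (s / 2) = Real.log s - Real.log 2 :=
      Real.log_div (ne_of_gt hs) two_ne_zero
    rw [hpa] at hlog
    simp only [he]
    rw [hls]
    have key : (Real.log (V s) - c0 - D * Real.log s)
        - a * (Real.log (V (s / 2)) - c0 - D * (Real.log s - Real.log 2))
        = Real.log (V s)
        - (a * Real.log K + (D - D * a) * Real.log s + a * Real.log (V (s / 2))) := by
      linear_combination -hid1
    linarith [hlog, key]
  -- iterate
  have hiterN : ∀ n : ℕ, ∀ s > (0:ℝ), a ^ n * e (s / 2 ^ n) ≤ e s := by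
    intro n
    induction n with
    | zero => intro s hs; simp
    | succ n ih =>
      intro s hs
      have hsn : 0 < s / 2 ^ n := by positivity
      have h2 := hstep _ hsn
      have hsplit : s / 2 ^ n / 2 = s / 2 ^ (n + 1) := by ring
      rw [hsplit] at h2
      calc a ^ (n + 1) * e (s / 2 ^ (n + 1)) = a ^ n * (a * e (s / 2 ^ (n + 1))) := by ring
        _ ≤ a ^ n * e (s / 2 ^ n) := by
            exact mul_le_mul_of_nonneg_left h2 (by positivity)
        _ ≤ e s := ih s hs
  intro s hs
  have hVs := hVpos s hs
  set A := Real.log (V s) - Real.log C - c0 - D * Real.log s with hA_def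
  set B := (D - Q) * Real.log 2 with hB_def
  have hA : ∀ n : ℕ, A + (n : ℝ) * B ≤ e (s / 2 ^ n) := by
    intro n
    have hsn : 0 < s / 2 ^ n := by positivity
    have h := hdbl s hs n
    have hlog : -Real.log C + (-(n : ℝ) * Q) * Real.log 2 + Real.log (V s)
        ≤ Real.log (V (s / 2 ^ n)) := by
      have h1 : Real.log (C⁻¹ * 2 ^ (-(n : ℝ) * Q) * V s) ≤ Real.log (V (s / 2 ^ n)) :=
        Real.log_le_log (by positivity) h
      rwa [Real.log_mul (by positivity) (by positivity),
        Real.log_mul (by positivity) (by positivity),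
        Real.log_inv, Real.log_rpow (by norm_num : (0:ℝ) < 2)] at h1
    have hls : Real.log (s / 2 ^ n) = Real.log s - (n : ℝ) * Real.log 2 := by
      rw [Real.log_div (ne_of_gt hs) (by positivity), Real.log_pow]
    simp only [he, hA_def, hB_def]
    rw [hls]
    nlinarith [hlog]
  have hbound : ∀ n : ℕ, a ^ n * (A + (n : ℝ) * B) ≤ e s := fun n =>
    le_trans (mul_le_mul_of_nonneg_left (hA n) (pow_nonneg ha0.le n)) (hiterN n s hs)
  have htend : Tendsto (fun n : ℕ => a ^ n * (A + (n : ℝ) * B)) atTop (nhds 0) := by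
    have h1 : Tendsto (fun n : ℕ => a ^ n) atTop (nhds 0) :=
      tendsto_pow_atTop_nhds_zero_of_lt_one ha0.le ha
    have h2 : Tendsto (fun n : ℕ => (n : ℝ) ^ 1 * a ^ n) atTop (nhds 0) :=
      tendsto_pow_const_mul_const_pow_of_lt_one 1 ha0.le ha
    have h3 := (h1.const_mul A).add (h2.const_mul B)
    simp only [mul_zero, add_zero] at h3
    convert h3 using 2 with n
    ring
  have he0 : (0:ℝ) ≤ e s := le_of_tendsto' htend hbound
  have hfin : c0 + D * Real.log s ≤ Real.log (V s) := by
    simp only [he] at he0; linarith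
  have key : K ^ (D / p) * 2 ^ (-(p * (D ^ 2 / p ^ 2))) * s ^ D
      = Real.exp (c0 + D * Real.log s) := by
    rw [Real.rpow_def_of_pos hK, Real.rpow_def_of_pos (by norm_num : (0:ℝ) < 2),
      Real.rpow_def_of_pos hs, ← Real.exp_add, ← Real.exp_add]
    congr 1
    rw [hc0]
    field_simp
    ring
  rw [ge_iff_le, key]
  calc Real.exp (c0 + D * Real.log s) ≤ Real.exp (Real.log (V s)) := Real.exp_le_exp.mpr hfin
    _ = V s := Real.exp_log hVs
end

section
/- Let $\rho_1, \rho_2 > 0$, $\kappa \ge 0$, $d \ge 1$, and $\lambda > 0$, $A > 0$, $B \ge 0$ be real numbers. Suppose that for every $\nu > 0$: $\left(\lambda^2 - \frac{\lambda^2}{d} + \frac{\kappa \lambda}{\nu} - \rho_1 \lambda\right) A \ge (\rho_2 - \nu \lambda) B$. Then $\lambda \ge \frac{\rho_1 \rho_2}{\frac{d-1}{d}\rho_2 + \kappa}$. -/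
/-!
Take `ν = ρ₂ / λ`, which kills the right-hand side. Positivity of `A` then makes the
coefficient on the left nonnegative, and multiplying it by `ρ₂ / λ` turns it into
`λ ((d - 1) / d ρ₂ + κ) - ρ₁ ρ₂`.
-/

lemma lichnerowicz_coeff_mul_eq {ρ₁ ρ₂ κ d lam : ℝ} (hρ₂ : ρ₂ ≠ 0) (hd : d ≠ 0) (hlam : lam ≠ 0) :
    (lam ^ 2 - lam ^ 2 / d + κ * lam / (ρ₂ / lam) - ρ₁ * lam) * (ρ₂ / lam) =
      lam * ((d - 1) / d * ρ₂ + κ) - ρ₁ * ρ₂ := by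
  field_simp

lemma mul_le_lam_mul_of_forall_pos {ρ₁ ρ₂ κ d lam A B : ℝ} (hρ₂ : 0 < ρ₂) (hd : d ≠ 0)
    (hlam : 0 < lam) (hA : 0 < A)
    (h : ∀ ν > (0:ℝ),
      (lam ^ 2 - lam ^ 2 / d + κ * lam / ν - ρ₁ * lam) * A ≥ (ρ₂ - ν * lam) * B) :
    ρ₁ * ρ₂ ≤ lam * ((d - 1) / d * ρ₂ + κ) := by
  have hν : 0 < ρ₂ / lam := div_pos hρ₂ hlam
  have hspec := h (ρ₂ / lam) hν
  rw [div_mul_cancel₀ _ hlam.ne', sub_self, zero_mul] at hspec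
  have hcoef := nonneg_of_mul_nonneg_left hspec hA
  have hprod := mul_nonneg hcoef hν.le
  rw [lichnerowicz_coeff_mul_eq hρ₂.ne' hd hlam.ne'] at hprod
  linarith

theorem stmt_12_general (ρ₁ ρ₂ κ d lam A B : ℝ)
    (hρ₂ : 0 < ρ₂) (hκ : 0 ≤ κ) (hd : 1 ≤ d)
    (hlam : 0 < lam) (hA : 0 < A)
    (h : ∀ ν > (0:ℝ),
      (lam ^ 2 - lam ^ 2 / d + κ * lam / ν - ρ₁ * lam) * A ≥ (ρ₂ - ν * lam) * B) :
    lam ≥ ρ₁ * ρ₂ / ((d - 1) / d * ρ₂ + κ) := by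
  have hd₀ : 0 < d := zero_lt_one.trans_le hd
  have hden : 0 ≤ (d - 1) / d * ρ₂ + κ :=
    add_nonneg (mul_nonneg (div_nonneg (sub_nonneg.2 hd) hd₀.le) hρ₂.le) hκ
  exact div_le_of_le_mul₀ hden hlam.le
    (mul_le_lam_mul_of_forall_pos hρ₂ hd₀.ne' hlam hA h)

theorem stmt_12 (ρ₁ ρ₂ κ d lam A B : ℝ)
    (hρ₁ : 0 < ρ₁) (hρ₂ : 0 < ρ₂) (hκ : 0 ≤ κ) (hd : 1 ≤ d)
    (hlam : 0 < lam) (hA : 0 < A) (hB : 0 ≤ B)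
    (h : ∀ ν > (0:ℝ),
      (lam ^ 2 - lam ^ 2 / d + κ * lam / ν - ρ₁ * lam) * A ≥ (ρ₂ - ν * lam) * B) :
    lam ≥ ρ₁ * ρ₂ / ((d - 1) / d * ρ₂ + κ) :=
  stmt_12_general ρ₁ ρ₂ κ d lam A B hρ₂ hκ hd hlam hA h
end
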